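/- For all n ≥ 3 the lower central series of B_n(ℝP²) is constant from the commutator subgroup onwards: Γ_m(B_n(ℝP²)) = Γ₂(B_n(ℝP²)) for all m ≥ 2. -/

import Mathlib

open FreeGroup in
/-- Relators of Van Buskirk's presentation of the braid group of the projective plane,
with 0-indexed generators: σ₀,…,σ_{n-2} (`Sum.inl`) and ρ₀,…,ρ_{n-1} (`Sum.inr`). -/
def vanBuskirkRels (n : ℕ) : Set (FreeGroup (Sum (Fin (n-1)) (Fin n))) :=
  {w | (∃ (i j : Fin (n-1)), ((i:ℕ)+2 ≤ (j:ℕ) ∨ (j:ℕ)+2 ≤ (i:ℕ)) ∧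
        w = of (Sum.inl i) * of (Sum.inl j) * (of (Sum.inl i))⁻¹ * (of (Sum.inl j))⁻¹)
    ∨ (∃ (i : ℕ) (h : i < n-1) (h' : i+1 < n-1),
        w = of (Sum.inl ⟨i,h⟩) * of (Sum.inl ⟨i+1,h'⟩) * of (Sum.inl ⟨i,h⟩) *
            (of (Sum.inl ⟨i+1,h'⟩))⁻¹ * (of (Sum.inl ⟨i,h⟩))⁻¹ * (of (Sum.inl ⟨i+1,h'⟩))⁻¹)
    ∨ (∃ (i : Fin (n-1)) (j : Fin n), (j:ℕ) ≠ (i:ℕ) ∧ (j:ℕ) ≠ (i:ℕ)+1 ∧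
        w = of (Sum.inl i) * of (Sum.inr j) * (of (Sum.inl i))⁻¹ * (of (Sum.inr j))⁻¹)
    ∨ (∃ (i : ℕ) (h : i < n-1) (hi : i < n) (hi' : i+1 < n),
        w = of (Sum.inl ⟨i,h⟩) * of (Sum.inr ⟨i+1,hi'⟩) * of (Sum.inl ⟨i,h⟩) *
            (of (Sum.inr ⟨i,hi⟩))⁻¹)
    ∨ (∃ (i : ℕ) (h : i < n-1) (hi : i < n) (hi' : i+1 < n),
        w = (of (Sum.inr ⟨i+1,hi'⟩))⁻¹ * (of (Sum.inr ⟨i,hi⟩))⁻¹ * of (Sum.inr ⟨i+1,hi'⟩) *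
            of (Sum.inr ⟨i,hi⟩) * ((of (Sum.inl ⟨i,h⟩))⁻¹)^2)
    ∨ (∃ (h : 0 < n),
        w = (of (Sum.inr ⟨0,h⟩))^2 *
            (((List.finRange (n-1)).map (fun i => of (Sum.inl i))).prod *
             (((List.finRange (n-1)).reverse.map (fun i => of (Sum.inl i))).prod))⁻¹)}

/-- The braid group `B_n(ℝP²)` of the projective plane, via Van Buskirk's presentation. -/
abbrev BnRP2 (n : ℕ) : Type := PresentedGroup (vanBuskirkRels n)

/-- The generator σ_i (0-indexed). -/
def BnRP2.sigma (n : ℕ) (i : Fin (n-1)) : BnRP2 n := PresentedGroup.of (Sum.inl i)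

/-- The generator ρ_j (0-indexed). -/
def BnRP2.rho (n : ℕ) (j : Fin n) : BnRP2 n := PresentedGroup.of (Sum.inr j)

/-!
Modulo `Γ₃` all commutators are central, and in such a group a braid relation
`a b a = b a b` forces `a = b`. Hence in `B_n(ℝP²)/Γ₃` all `σ_i` coincide; for `n ≥ 3` the
relation `σ₂ ρ₁ = ρ₁ σ₂` makes this common image commute with that of `ρ₁`, and
`ρ_{i+1} = σ_i⁻¹ ρ_i σ_i⁻¹` puts every `ρ_j` in the subgroup generated by these two commuting
elements. So `B_n(ℝP²)/Γ₃` is abelian, i.e. `Γ₂ = Γ₃`, and the series is constant from `Γ₂` on.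
-/

open scoped commutatorElement

theorem eq_of_braid_of_commute_commutatorElement {G : Type*} [Group G] {a b : G}
    (hc : Commute ⁅a, b⁆ b) (h : a * b * a = b * a * b) : a = b := by
  have hl : a * b * a = ⁅a, b⁆ * b * a * a := by group
  have hr : b * a * b = ⁅a, b⁆ * b * b * a := by
    calc b * a * b = b * ⁅a, b⁆ * b * a := by group
      _ = ⁅a, b⁆ * b * b * a := by rw [hc.symm.eq]
  rw [hl, hr] at h
  exact mul_left_cancel (mul_right_cancel h)

theorem Subgroup.lowerCentralSeries_eq_of_succ_eq {G : Type*} [Group G] (S : Subgroup G)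
    {k : ℕ} (h : S.lowerCentralSeries (k + 1) = S.lowerCentralSeries k) {m : ℕ} (hm : k ≤ m) :
    S.lowerCentralSeries m = S.lowerCentralSeries k := by
  induction m, hm using Nat.le_induction with
  | base => rfl
  | succ m _ ih => rw [lowerCentralSeries_succ, ih, ← lowerCentralSeries_succ, h]

theorem Subgroup.commute_commutatorElement_quotient_lowerCentralSeries_two {G : Type*} [Group G]
    (x y z : G ⧸ lowerCentralSeries (⊤ : Subgroup G) 2) : Commute ⁅x, y⁆ z := by
  obtain ⟨a, rfl⟩ := QuotientGroup.mk_surjective x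
  obtain ⟨b, rfl⟩ := QuotientGroup.mk_surjective y
  obtain ⟨c, rfl⟩ := QuotientGroup.mk_surjective z
  have hab : ⁅a, b⁆ ∈ lowerCentralSeries (⊤ : Subgroup G) 1 :=
    commutator_mem_commutator (mem_top a) (mem_top b)
  have habc : ⁅⁅a, b⁆, c⁆ ∈ lowerCentralSeries (⊤ : Subgroup G) 2 :=
    commutator_mem_commutator hab (mem_top c)
  have h := (QuotientGroup.eq_one_iff _).mpr habc
  rw [← QuotientGroup.mk'_apply, map_commutatorElement, map_commutatorElement] at h
  exact commutatorElement_eq_one_iff_commute.mp h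

namespace BnRP2

variable {n : ℕ}

theorem sigma_braid (i : ℕ) (h : i < n - 1) (h' : i + 1 < n - 1) :
    sigma n ⟨i, h⟩ * sigma n ⟨i + 1, h'⟩ * sigma n ⟨i, h⟩ =
      sigma n ⟨i + 1, h'⟩ * sigma n ⟨i, h⟩ * sigma n ⟨i + 1, h'⟩ :=
  PresentedGroup.mk_eq_mk_of_mul_inv_mem (Or.inr (Or.inl ⟨i, h, h', by group⟩))

theorem commute_sigma_rho (i : Fin (n - 1)) (j : Fin n) (hj : (j : ℕ) ≠ i)
    (hj' : (j : ℕ) ≠ i + 1) :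
    Commute (sigma n i) (rho n j) :=
  commutatorElement_eq_one_iff_commute.mp <|
    PresentedGroup.one_of_mem (Or.inr (Or.inr (Or.inl ⟨i, j, hj, hj', rfl⟩)))

theorem sigma_mul_rho_succ_mul_sigma (i : ℕ) (hi : i + 1 < n) :
    sigma n ⟨i, by omega⟩ * rho n ⟨i + 1, hi⟩ * sigma n ⟨i, by omega⟩ = rho n ⟨i, by omega⟩ :=
  PresentedGroup.mk_eq_mk_of_mul_inv_mem
    (Or.inr (Or.inr (Or.inr (Or.inl ⟨i, by omega, by omega, hi, rfl⟩))))

section TwoStepNilpotentQuotient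

variable {Q : Type*} [Group Q] (f : BnRP2 n →* Q) (hc : ∀ x y z : Q, Commute ⁅x, y⁆ z)
include hc

theorem map_sigma_eq (i j : Fin (n - 1)) : f (sigma n i) = f (sigma n j) := by
  suffices h : ∀ i : Fin (n - 1), f (sigma n i) = f (sigma n ⟨0, i.pos⟩) from
    (h i).trans (h j).symm
  rintro ⟨i, hi⟩
  induction i with
  | zero => rfl
  | succ k ih =>
    have hbraid := congrArg f (sigma_braid k (by omega) hi)
    simp only [map_mul] at hbraid
    rw [← ih (by omega)]
    exact (eq_of_braid_of_commute_commutatorElement (hc _ _ _) hbraid).symm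

theorem map_rho_mem_closure (i : Fin (n - 1)) (j : Fin n) :
    f (rho n j) ∈ Subgroup.closure {f (sigma n i), f (rho n ⟨0, j.pos⟩)} := by
  have hs : f (sigma n i) ∈ Subgroup.closure {f (sigma n i), f (rho n ⟨0, j.pos⟩)} :=
    Subgroup.subset_closure (by simp)
  obtain ⟨j, hj⟩ := j
  induction j with
  | zero => exact Subgroup.subset_closure (by simp)
  | succ k ih =>
    have hrel := congrArg f (sigma_mul_rho_succ_mul_sigma k hj)
    simp only [map_mul, map_sigma_eq f hc _ i] at hrel
    have hrho : f (rho n ⟨k + 1, hj⟩) =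
        (f (sigma n i))⁻¹ * f (rho n ⟨k, by omega⟩) * (f (sigma n i))⁻¹ := by
      rw [← hrel]; group
    rw [hrho]
    exact mul_mem (mul_mem (inv_mem hs) (ih (by omega) hs)) (inv_mem hs)

theorem commute_map (hn : 3 ≤ n) (a b : BnRP2 n) : Commute (f a) (f b) := by
  set s := f (sigma n ⟨1, by omega⟩)
  set r := f (rho n ⟨0, by omega⟩)
  have hsr : Commute s r := (commute_sigma_rho _ _ (by simp) (by simp)).map f
  have hgen : ∀ x, f (PresentedGroup.of x) ∈ Subgroup.closure {s, r} := by
    rintro (i | j)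
    · change f (sigma n i) ∈ _
      rw [map_sigma_eq f hc i ⟨1, by omega⟩]
      exact Subgroup.subset_closure (Set.mem_insert _ _)
    · exact map_rho_mem_closure f hc _ j
  have hmem (g : BnRP2 n) : f g ∈ Subgroup.closure {s, r} :=
    PresentedGroup.generated_by _ ((Subgroup.closure {s, r}).comap f) hgen g
  have : IsMulCommutative (Subgroup.closure {s, r}) := by
    refine Subgroup.isMulCommutative_closure ?_
    simp only [Set.mem_insert_iff, Set.mem_singleton_iff]
    rintro x (rfl | rfl) y (rfl | rfl)
    exacts [rfl, hsr.eq, hsr.symm.eq, rfl]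
  exact Subgroup.mem_centralizer_iff.mp (Subgroup.le_centralizer _ (hmem b)) _ (hmem a)

end TwoStepNilpotentQuotient

end BnRP2

/-- For all `n ≥ 3`, the lower central series of `B_n(ℝP²)` is constant from the commutator
subgroup onwards: `Γ_m = Γ_2` for all `m ≥ 2`. (Here `Γ_m(G) = lowerCentralSeries G (m-1)`.) -/
theorem lowerCentralSeries_BnRP2_constant (n : ℕ) (hn : 3 ≤ n) :
    ∀ m : ℕ, 2 ≤ m →
      Subgroup.lowerCentralSeries (⊤ : Subgroup (BnRP2 n)) (m - 1) =
        Subgroup.lowerCentralSeries (⊤ : Subgroup (BnRP2 n)) 1 := by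
  intro m hm
  set Γ := Subgroup.lowerCentralSeries (⊤ : Subgroup (BnRP2 n))
  have hab : IsMulCommutative (BnRP2 n ⧸ Γ 2) := by
    refine ⟨⟨fun x y => ?_⟩⟩
    obtain ⟨a, rfl⟩ := QuotientGroup.mk'_surjective (Γ 2) x
    obtain ⟨b, rfl⟩ := QuotientGroup.mk'_surjective (Γ 2) y
    exact BnRP2.commute_map _
      Subgroup.commute_commutatorElement_quotient_lowerCentralSeries_two hn a b
  have hΓ : Γ 2 = Γ 1 := le_antisymm (Subgroup.lowerCentralSeries_antitone _ (by norm_num))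
    (Subgroup.Normal.quotient_commutative_iff_commutator_le.mp hab)
  exact Subgroup.lowerCentralSeries_eq_of_succ_eq _ hΓ (by omega)
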